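/- (Bressoud–Singh conjugate Bailey pair) The pair δ_n = q^n, γ_n = (q^n/(q;q)_∞²) Σ_{j≥0} (-1)^j q^{j(j+1)/2 + 2nj} is a conjugate Bailey pair relative to a = 1, i.e. γ_n = Σ_{j≥n} δ_j / ( (q;q)_{j-n} (q;q)_{j+n} ) for all n ≥ 0. -/

import Mathlib

open scoped BigOperators

/-- Finite q-Pochhammer symbol `(a;q)_n`. -/
noncomputable def qPoch (a q : ℂ) (n : ℕ) : ℂ := ∏ k ∈ Finset.range n, (1 - a * q ^ k)

/-- Infinite q-Pochhammer symbol `(a;q)_∞`. -/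
noncomputable def qPochInf (a q : ℂ) : ℂ := ∏' k : ℕ, (1 - a * q ^ k)

/-- q-Pochhammer symbol with integer index: `(a;q)_m`, where for negative `m`
`(a;q)_{-k} = 1/∏_{j=1}^{k}(1 - a q^{-j})`. -/
noncomputable def qPochZ (a q : ℂ) (m : ℤ) : ℂ :=
  if 0 ≤ m then qPoch a q m.toNat
  else 1 / ∏ k ∈ Finset.range (-m).toNat, (1 - a * q ^ (-(k : ℤ) - 1))

/-- `(α, β)` is a Bailey pair relative to `a` in base `q`. -/
def IsBaileyPair (q a : ℂ) (α β : ℕ → ℂ) : Prop :=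
  ∀ n : ℕ, β n = ∑ j ∈ Finset.range (n + 1),
    α j / (qPoch q q (n - j) * qPoch (a * q) q (n + j))

/-- The Andrews–Hickerson Bailey pair `α*_n(a,b,c,q)` (Lemma 2.1). -/
noncomputable def alphaStar (a b c q : ℂ) (n : ℕ) : ℂ :=
  q ^ (n ^ 2) * (b * c) ^ n * (1 - a * q ^ (2 * n)) * qPoch (a / b) q n * qPoch (a / c) q n /
      ((1 - a) * qPoch (b * q) q n * qPoch (c * q) q n) *
    ∑ j ∈ Finset.range (n + 1),
      (-1 : ℂ) ^ j * (1 - a * q ^ (2 * (j : ℤ) - 1)) * qPochZ a q ((j : ℤ) - 1) *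
          qPoch b q j * qPoch c q j /
        (q ^ (j * (j - 1) / 2) * (b * c) ^ j * qPoch q q j * qPoch (a / b) q j *
          qPoch (a / c) q j)

/-!
The proof rests on Euler's two q-exponential identities,
`∑ zᵏ/(q;q)ₖ = 1/(z;q)_∞` and `∑ (-1)ᵏ q^(k choose 2) zᵏ/(q;q)ₖ = (z;q)_∞`, each proved by
iterating its functional equation in `z ↦ zq` and letting `z qᴺ → 0`.
Writing `1/(q;q)_{2n+i} = (q^{2n+i+1};q)_∞/(q;q)_∞` and expanding by the second identity turns
`∑ᵢ qⁱ/((q;q)ᵢ (q;q)_{2n+i})` into an absolutely convergent double sum; after swapping the sums,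
the inner sum over `i` is `1/(q^{k+1};q)_∞ = (q;q)ₖ/(q;q)_∞` by the first identity.
-/

open Filter Topology

section NormedField

variable {𝕜 : Type*} [NormedField 𝕜] {q : 𝕜}

lemma norm_mul_pow_le (hq : ‖q‖ ≤ 1) (a : 𝕜) (k : ℕ) : ‖a * q ^ k‖ ≤ ‖a‖ := by
  rw [norm_mul, norm_pow]
  exact mul_le_of_le_one_right (norm_nonneg a) (pow_le_one₀ (norm_nonneg q) hq)

lemma one_sub_self_mul_pow_ne_zero (hq : ‖q‖ < 1) (k : ℕ) : 1 - q * q ^ k ≠ 0 := fun h => by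
  simpa [← sub_eq_zero.1 h] using (norm_mul_pow_le hq.le q k).trans_lt hq

lemma summable_norm_mul_pow (hq : ‖q‖ < 1) (a : 𝕜) : Summable fun k : ℕ => ‖a * q ^ k‖ := by
  simpa [norm_mul, norm_pow] using
    (summable_geometric_of_lt_one (norm_nonneg q) hq).mul_left ‖a‖

variable [CompleteSpace 𝕜]

lemma multipliable_one_sub_mul_pow (hq : ‖q‖ < 1) (a : 𝕜) :
    Multipliable fun k : ℕ => 1 - a * q ^ k := by
  simpa [sub_eq_add_neg] using
    multipliable_one_add_of_summable (f := fun k => -(a * q ^ k))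
      (by simpa using summable_norm_mul_pow hq a)

lemma tprod_one_sub_mul_pow_ne_zero (hq : ‖q‖ < 1) {a : 𝕜} (ha : ∀ k : ℕ, 1 - a * q ^ k ≠ 0) :
    ∏' k : ℕ, (1 - a * q ^ k) ≠ 0 := by
  simpa [sub_eq_add_neg] using
    tprod_one_add_ne_zero_of_summable (f := fun k => -(a * q ^ k))
      (fun k => by simpa [sub_eq_add_neg] using ha k) (by simpa using summable_norm_mul_pow hq a)

end NormedField

section QPochhammer

variable {q : ℂ}

lemma hasProd_qPochInf (hq : ‖q‖ < 1) (a : ℂ) :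
    HasProd (fun k : ℕ => 1 - a * q ^ k) (qPochInf a q) :=
  (multipliable_one_sub_mul_pow hq a).hasProd

lemma tendsto_qPoch (hq : ‖q‖ < 1) (a : ℂ) : Tendsto (qPoch a q) atTop (𝓝 (qPochInf a q)) :=
  (hasProd_qPochInf hq a).tendsto_prod_nat

lemma qPoch_succ (a : ℂ) (k : ℕ) : qPoch a q (k + 1) = qPoch a q k * (1 - a * q ^ k) :=
  Finset.prod_range_succ _ k

lemma qPoch_mul_qPochInf (hq : ‖q‖ < 1) (a : ℂ) (m : ℕ) :
    qPoch a q m * qPochInf (a * q ^ m) q = qPochInf a q := by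
  have hshift : HasProd (fun k => 1 - a * q ^ (k + m)) (qPochInf (a * q ^ m) q) := by
    simpa only [pow_add, mul_assoc, mul_comm (q ^ m)] using hasProd_qPochInf hq (a * q ^ m)
  exact (HasProd.prod_range_mul (f := fun k => 1 - a * q ^ k) hshift).unique
    (hasProd_qPochInf hq a)

lemma qPoch_self_ne_zero (hq : ‖q‖ < 1) (k : ℕ) : qPoch q q k ≠ 0 :=
  Finset.prod_ne_zero_iff.2 fun i _ => one_sub_self_mul_pow_ne_zero hq i

lemma qPochInf_self_ne_zero (hq : ‖q‖ < 1) : qPochInf q q ≠ 0 :=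
  tprod_one_sub_mul_pow_ne_zero hq (one_sub_self_mul_pow_ne_zero hq)

lemma qPochInf_self_mul_pow (hq : ‖q‖ < 1) (m : ℕ) :
    qPochInf (q * q ^ m) q = qPochInf q q / qPoch q q m := by
  rw [eq_div_iff (qPoch_self_ne_zero hq m), mul_comm, qPoch_mul_qPochInf hq]

/-- `(‖q‖;‖q‖)_∞ > 0` bounds every `‖(q;q)ₖ‖` from below. -/
lemma exists_norm_inv_qPoch_le (hq : ‖q‖ < 1) : ∃ B, ∀ k, ‖(qPoch q q k)⁻¹‖ ≤ B := by
  set r := ‖q‖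
  have hr : ‖r‖ < 1 := by simpa [r] using hq
  have hfac (i : ℕ) : 0 ≤ 1 - r * r ^ i ∧ 1 - r * r ^ i ≤ 1 :=
    ⟨sub_nonneg.2 (mul_le_one₀ hq.le (by positivity) (pow_le_one₀ (by positivity) hq.le)),
      sub_le_self _ (by positivity)⟩
  have hpos : 0 < ∏' i : ℕ, (1 - r * r ^ i) :=
    lt_of_le_of_ne (tprod_nonneg fun i => (hfac i).1)
      (tprod_one_sub_mul_pow_ne_zero hr (one_sub_self_mul_pow_ne_zero hr)).symm
  have hanti : Antitone fun k => ∏ i ∈ Finset.range k, (1 - r * r ^ i) :=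
    antitone_nat_of_succ_le fun k => by
      rw [Finset.prod_range_succ]
      exact mul_le_of_le_one_right (Finset.prod_nonneg fun i _ => (hfac i).1) (hfac k).2
  refine ⟨(∏' i : ℕ, (1 - r * r ^ i))⁻¹, fun k => norm_inv (qPoch q q k) ▸ inv_anti₀ hpos ?_⟩
  refine (hanti.le_of_tendsto (multipliable_one_sub_mul_pow hr r).hasProd.tendsto_prod_nat k).trans ?_
  rw [qPoch, norm_prod]
  refine Finset.prod_le_prod (fun i _ => (hfac i).1) fun i _ => ?_
  simpa [r, norm_pow] using norm_sub_norm_le (1 : ℂ) (q * q ^ i)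

end QPochhammer

section BoundedCoefficients

variable {a : ℕ → ℂ} {B : ℝ}

lemma summable_norm_mul_pow_of_bounded (ha : ∀ k, ‖a k‖ ≤ B) {z : ℂ} (hz : ‖z‖ < 1) :
    Summable fun k => ‖a k * z ^ k‖ :=
  .of_nonneg_of_le (fun k => norm_nonneg _)
    (fun k => by
      rw [norm_mul, norm_pow]
      exact mul_le_mul_of_nonneg_right (ha k) (by positivity))
    ((summable_geometric_of_lt_one (norm_nonneg z) hz).mul_left B)

lemma continuousAt_tsum_mul_pow_zero (ha : ∀ k, ‖a k‖ ≤ B) :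
    ContinuousAt (fun z => ∑' k, a k * z ^ k) 0 := by
  refine (continuousOn_tsum (fun k => by fun_prop)
    (summable_geometric_two.mul_left B) fun k z hz => ?_).continuousAt
    (Metric.closedBall_mem_nhds 0 (by norm_num : (0 : ℝ) < 1 / 2))
  rw [norm_mul, norm_pow]
  refine mul_le_mul (ha k) (pow_le_pow_left₀ (norm_nonneg z) ?_ k) (by positivity)
    ((norm_nonneg _).trans (ha 0))
  simpa using hz

lemma tsum_mul_zero_pow (a : ℕ → ℂ) : ∑' k, a k * 0 ^ k = a 0 := by
  rw [tsum_eq_single 0 fun k hk => by simp [hk]]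
  simp

end BoundedCoefficients

section FunctionalEquations

variable {q : ℂ} {g : ℂ → ℂ}

lemma eq_qPochInf_mul_of_eq_one_sub_mul (hq : ‖q‖ < 1) (hg0 : ContinuousAt g 0)
    (hg : ∀ w, ‖w‖ < 1 → g w = (1 - w) * g (w * q)) {z : ℂ} (hz : ‖z‖ < 1) :
    g z = qPochInf z q * g 0 := by
  have hiter (N : ℕ) : g z = qPoch z q N * g (z * q ^ N) := by
    induction N with
    | zero => simp [qPoch]
    | succ N ih =>
      rw [ih, hg _ ((norm_mul_pow_le hq.le z N).trans_lt hz), qPoch_succ, pow_succ, mul_assoc]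
      ring
  have hlim : Tendsto (fun N => z * q ^ N) atTop (𝓝 0) := by
    simpa using (tendsto_pow_atTop_nhds_zero_of_norm_lt_one hq).const_mul z
  exact tendsto_nhds_unique (tendsto_const_nhds.congr hiter)
    ((tendsto_qPoch hq z).mul (hg0.tendsto.comp hlim))

lemma qPochInf_mul_eq_of_mul_eq_one_sub_mul (hq : ‖q‖ < 1) (hg0 : ContinuousAt g 0)
    (hg : ∀ w, ‖w‖ < 1 → g (w * q) = (1 - w) * g w) {z : ℂ} (hz : ‖z‖ < 1) :
    qPochInf z q * g z = g 0 := by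
  have hiter (N : ℕ) : qPoch z q N * g z = g (z * q ^ N) := by
    induction N with
    | zero => simp [qPoch]
    | succ N ih =>
      rw [pow_succ, ← mul_assoc, hg _ ((norm_mul_pow_le hq.le z N).trans_lt hz), ← ih, qPoch_succ]
      ring
  have hlim : Tendsto (fun N => z * q ^ N) atTop (𝓝 0) := by
    simpa using (tendsto_pow_atTop_nhds_zero_of_norm_lt_one hq).const_mul z
  exact tendsto_nhds_unique ((tendsto_qPoch hq z).mul_const _)
    ((hg0.tendsto.comp hlim).congr fun N => (hiter N).symm)

end FunctionalEquations

section Euler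

variable {q : ℂ}

/-- Euler's `e_q(z)`. -/
noncomputable def qExp (q z : ℂ) : ℂ := ∑' k, (qPoch q q k)⁻¹ * z ^ k

/-- Euler's `E_q(-z)`. -/
noncomputable def qExpAlt (q z : ℂ) : ℂ :=
  ∑' k, ((-1) ^ k * q ^ k.choose 2 * (qPoch q q k)⁻¹) * z ^ k

lemma qExp_zero : qExp q 0 = 1 := by
  simp [qExp, tsum_mul_zero_pow, qPoch]

lemma qExpAlt_zero : qExpAlt q 0 = 1 := by
  simp [qExpAlt, tsum_mul_zero_pow, qPoch]

lemma norm_qExpAlt_coeff_le (hq : ‖q‖ ≤ 1) (k : ℕ) :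
    ‖(-1) ^ k * q ^ k.choose 2 * (qPoch q q k)⁻¹‖ ≤ ‖(qPoch q q k)⁻¹‖ := by
  rw [norm_mul, norm_mul, norm_pow, norm_pow, norm_neg, norm_one, one_pow, one_mul]
  exact mul_le_of_le_one_left (norm_nonneg _) (pow_le_one₀ (norm_nonneg q) hq)

lemma norm_mul_self_lt_one (hq : ‖q‖ < 1) {z : ℂ} (hz : ‖z‖ < 1) : ‖z * q‖ < 1 := by
  simpa using (norm_mul_pow_le hq.le z 1).trans_lt hz

lemma qExp_mul (hq : ‖q‖ < 1) {z : ℂ} (hz : ‖z‖ < 1) : qExp q (z * q) = (1 - z) * qExp q z := by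
  obtain ⟨B, hB⟩ := exists_norm_inv_qPoch_le hq
  have hs₁ := (summable_norm_mul_pow_of_bounded hB hz).of_norm
  have hs₂ := (summable_norm_mul_pow_of_bounded hB (norm_mul_self_lt_one hq hz)).of_norm
  suffices qExp q z - qExp q (z * q) = z * qExp q z by linear_combination -this
  rw [qExp, qExp, ← hs₁.tsum_sub hs₂, (hs₁.sub hs₂).tsum_eq_zero_add, ← tsum_mul_left]
  simp only [pow_zero, sub_self, zero_add]
  refine tsum_congr fun k => ?_
  rw [qPoch_succ]
  field_simp [qPoch_self_ne_zero hq k, one_sub_self_mul_pow_ne_zero hq k]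
  ring

lemma qExpAlt_eq (hq : ‖q‖ < 1) {z : ℂ} (hz : ‖z‖ < 1) :
    qExpAlt q z = (1 - z) * qExpAlt q (z * q) := by
  obtain ⟨B, hB⟩ := exists_norm_inv_qPoch_le hq
  have hB' k := (norm_qExpAlt_coeff_le hq.le k).trans (hB k)
  have hs₁ := (summable_norm_mul_pow_of_bounded hB' hz).of_norm
  have hs₂ := (summable_norm_mul_pow_of_bounded hB' (norm_mul_self_lt_one hq hz)).of_norm
  suffices qExpAlt q z - qExpAlt q (z * q) = -z * qExpAlt q (z * q) by linear_combination this
  rw [qExpAlt, qExpAlt, ← hs₁.tsum_sub hs₂, (hs₁.sub hs₂).tsum_eq_zero_add, ← tsum_mul_left]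
  simp only [pow_zero, sub_self, zero_add]
  refine tsum_congr fun k => ?_
  rw [qPoch_succ, Nat.choose_succ_succ', Nat.choose_one_right]
  field_simp [qPoch_self_ne_zero hq k, one_sub_self_mul_pow_ne_zero hq k]
  ring

lemma qPochInf_mul_qExp (hq : ‖q‖ < 1) {z : ℂ} (hz : ‖z‖ < 1) : qPochInf z q * qExp q z = 1 := by
  obtain ⟨B, hB⟩ := exists_norm_inv_qPoch_le hq
  have h := qPochInf_mul_eq_of_mul_eq_one_sub_mul (g := qExp q) hq
    (continuousAt_tsum_mul_pow_zero hB) (fun w hw => qExp_mul hq hw) hz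
  rwa [qExp_zero] at h

lemma qExpAlt_eq_qPochInf (hq : ‖q‖ < 1) {z : ℂ} (hz : ‖z‖ < 1) : qExpAlt q z = qPochInf z q := by
  obtain ⟨B, hB⟩ := exists_norm_inv_qPoch_le hq
  have h := eq_qPochInf_mul_of_eq_one_sub_mul (g := qExpAlt q) hq
    (continuousAt_tsum_mul_pow_zero fun k => (norm_qExpAlt_coeff_le hq.le k).trans (hB k))
    (fun w hw => qExpAlt_eq hq hw) hz
  rwa [qExpAlt_zero, mul_one] at h

end Euler

lemma tsum_pow_div_qPoch_mul_qPoch {q : ℂ} (hq : ‖q‖ < 1) (m : ℕ) :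
    ∑' i, q ^ i / (qPoch q q i * qPoch q q (m + i)) =
      (qPochInf q q ^ 2)⁻¹ * ∑' k, (-1) ^ k * q ^ (k.choose 2 + (m + 1) * k) := by
  have hnorm (j : ℕ) : ‖q * q ^ j‖ < 1 := (norm_mul_pow_le hq.le q j).trans_lt hq
  set c : ℕ → ℂ := fun k => (-1) ^ k * q ^ k.choose 2 * (qPoch q q k)⁻¹
  set T : ℕ → ℕ → ℂ := fun i k => ((qPoch q q i)⁻¹ * q ^ i) * (c k * (q * q ^ (m + i)) ^ k)
  have hrow (i : ℕ) :
      q ^ i / (qPoch q q i * qPoch q q (m + i)) = (qPochInf q q)⁻¹ * ∑' k, T i k := by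
    have h : ∑' k, T i k = (qPoch q q i)⁻¹ * q ^ i * qExpAlt q (q * q ^ (m + i)) := tsum_mul_left
    rw [h, qExpAlt_eq_qPochInf hq (hnorm _), qPochInf_self_mul_pow hq]
    field_simp [qPochInf_self_ne_zero hq]
  have hcol (k : ℕ) :
      ∑' i, T i k = (-1) ^ k * q ^ (k.choose 2 + (m + 1) * k) / qPochInf q q := by
    have h : ∑' i, T i k = c k * q ^ ((m + 1) * k) * qExp q (q * q ^ k) := by
      rw [qExp, ← tsum_mul_left]
      exact tsum_congr fun i => by ring
    have hexp := qPochInf_mul_qExp hq (hnorm k)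
    rw [qPochInf_self_mul_pow hq] at hexp
    rw [h, eq_div_iff (qPochInf_self_ne_zero hq)]
    field_simp [qPoch_self_ne_zero hq k] at hexp ⊢
    rw [hexp]
    simp only [c, pow_add]
    field_simp [qPoch_self_ne_zero hq k]
  obtain ⟨B, hB⟩ := exists_norm_inv_qPoch_le hq
  have hs := summable_norm_mul_pow_of_bounded hB hq
  have hT : Summable (Function.uncurry T) := by
    refine .of_norm_bounded (hs.mul_of_nonneg hs (fun _ => norm_nonneg _) fun _ => norm_nonneg _)
      fun ⟨i, k⟩ => ?_
    simp only [Function.uncurry_apply_pair, T, norm_mul, norm_pow]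
    gcongr
    exacts [norm_qExpAlt_coeff_le hq.le k, by simpa using norm_mul_pow_le hq.le q (m + i)]
  rw [tsum_congr hrow, tsum_mul_left, ← hT.tsum_comm, tsum_congr hcol]
  simp only [div_eq_mul_inv, tsum_mul_right]
  ring

theorem stmt17 (q : ℂ) (hq : ‖q‖ < 1) :
    ∀ n : ℕ, (q ^ n / qPochInf q q ^ 2) *
        ∑' j : ℕ, (-1 : ℂ) ^ j * q ^ (j * (j + 1) / 2 + 2 * n * j) =
      ∑' i : ℕ, q ^ (n + i) / (qPoch q q i * qPoch q q (2 * n + i)) := by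
  intro n
  have hexp (j : ℕ) : j * (j + 1) / 2 + 2 * n * j = j.choose 2 + (2 * n + 1) * j := by
    have h := Nat.choose_two_right (j + 1)
    rw [Nat.choose_succ_succ', Nat.choose_one_right, Nat.add_sub_cancel, mul_comm] at h
    rw [← h]
    ring
  simp_rw [pow_add q n, mul_div_assoc, tsum_mul_left, tsum_pow_div_qPoch_mul_qPoch hq, hexp]
  ring
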